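/- Define $T(z) = \frac{(z+1)^2 - i(1-z)^2}{(z+1)^2 + i(1-z)^2}$. Then for pairwise distinct $a, b, c$ in the closed upper half unit disk with $T(a) \ne T(b)$, writing $k = \frac{c-b}{a-b}$, there are absolute constants such that $\frac{|k|^2}{C_1(|k|+1)} \le \left|\frac{T(c)-T(b)}{T(a)-T(b)}\right| \le C_2 |k|(1+|k|)$; in particular one may take $C_1, C_2$ of the form $5 \cdot \frac{8}{2(\sqrt 2 -1)}$-type constants (e.g. $C_1 = C_2 = 100$ works). -/

import Mathlib

open Complex

noncomputable def T (z : ℂ) : ℂ :=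
  ((z + 1) ^ 2 - I * (1 - z) ^ 2) / ((z + 1) ^ 2 + I * (1 - z) ^ 2)

/-!
Writing `T = N / D` with `D z = (z + 1)² + i (1 - z)²`, one has
`T c - T b = 8 i (c - b)(1 - b c) / (D c D b)`, so the ratio in question is
`k · (1 - b c)/(1 - b a) · D a / D c` with `k = (c - b)/(a - b)`.
On the closed upper half disk `|D|` lies in `[2(√2 - 1), 8]`, and since there
`|a - b| ≤ |1 - a b|`, the triangle inequality confines `|1 - b c|/|1 - b a|`
to `[|k|/(2|k| + 1), |k| + 2]`.
-/

noncomputable def denomT (z : ℂ) : ℂ :=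
  (z + 1) ^ 2 + I * (1 - z) ^ 2

lemma normSq_one_sub_mul_sub_normSq_sub (a b : ℂ) :
    normSq (1 - a * b) - normSq (a - b) = (1 - normSq a) * (1 - normSq b) + 4 * a.im * b.im := by
  simp only [normSq_apply, sub_re, sub_im, mul_re, mul_im, one_re, one_im]
  ring

lemma norm_sub_le_norm_one_sub_mul {a b : ℂ} (ha : ‖a‖ ≤ 1) (hb : ‖b‖ ≤ 1)
    (hab : 0 ≤ a.im * b.im) : ‖a - b‖ ≤ ‖1 - a * b‖ := by
  have ha' : normSq a ≤ 1 := by rw [← Complex.sq_norm]; nlinarith [norm_nonneg a]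
  have hb' : normSq b ≤ 1 := by rw [← Complex.sq_norm]; nlinarith [norm_nonneg b]
  have key := normSq_one_sub_mul_sub_normSq_sub a b
  rw [← sq_le_sq₀ (norm_nonneg _) (norm_nonneg _), Complex.sq_norm, Complex.sq_norm]
  nlinarith [mul_nonneg (sub_nonneg.2 ha') (sub_nonneg.2 hb')]

lemma denomT_eq_mul (z : ℂ) :
    denomT z = (1 + I) * ((z - I * (1 + √2)) * (z - I * (1 - √2))) := by
  have hs : ((√2 : ℝ) : ℂ) ^ 2 = 2 := by
    rw [← ofReal_pow, Real.sq_sqrt zero_le_two]; norm_num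
  unfold denomT
  linear_combination (I ^ 2 * (1 + I)) * hs + (2 * z + 1 + I) * I_sq

-- The roots `i (1 ± √2)` of `denomT` lie at distance `≥ √2` from the unit disk and
-- `≥ √2 - 1` from the upper half plane.
lemma two_mul_sqrt_two_sub_one_le_norm_denomT {z : ℂ} (hz : ‖z‖ ≤ 1) (hz' : 0 ≤ z.im) :
    2 * (√2 - 1) ≤ ‖denomT z‖ := by
  have hs : 1 ≤ √2 := Real.one_le_sqrt.2 one_le_two
  have h1 : ‖1 + I‖ = √2 := by
    rw [norm_def, normSq_apply]; norm_num
  have h2 : √2 ≤ ‖z - I * (1 + √2)‖ := by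
    have : ‖I * (1 + (√2 : ℂ))‖ = 1 + √2 := by
      rw [norm_mul, norm_I, one_mul, ← ofReal_one, ← ofReal_add, norm_real, Real.norm_eq_abs,
        abs_of_nonneg (by positivity)]
    linarith [norm_sub_norm_le (I * (1 + (√2 : ℂ))) z, norm_sub_rev z (I * (1 + (√2 : ℂ)))]
  have h3 : √2 - 1 ≤ ‖z - I * (1 - √2)‖ := by
    have him : (z - I * (1 - √2)).im = z.im + (√2 - 1) := by
      simp only [sub_im, mul_im, I_re, I_im, sub_re, one_re, one_im, ofReal_re, ofReal_im]
      ring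
    linarith [abs_im_le_norm (z - I * (1 - √2)), le_abs_self (z - I * (1 - √2)).im]
  rw [denomT_eq_mul, norm_mul, norm_mul, h1]
  have := mul_le_mul h2 h3 (by linarith) (norm_nonneg _)
  nlinarith [Real.sq_sqrt zero_le_two]

lemma norm_denomT_le {z : ℂ} (hz : ‖z‖ ≤ 1) : ‖denomT z‖ ≤ 8 := by
  have h1 : ‖z + 1‖ ≤ 2 := by linarith [norm_add_le z 1, norm_one (α := ℂ)]
  have h2 : ‖1 - z‖ ≤ 2 := by linarith [norm_sub_le 1 z, norm_one (α := ℂ)]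
  calc ‖denomT z‖ ≤ ‖z + 1‖ ^ 2 + ‖1 - z‖ ^ 2 := by
        rw [← norm_pow, ← norm_pow, ← one_mul (‖(1 - z) ^ 2‖), ← norm_I, ← norm_mul]
        exact norm_add_le _ _
    _ ≤ 8 := by nlinarith [norm_nonneg (z + 1), norm_nonneg (1 - z)]

lemma norm_denomT_div_mem_Icc {a c : ℂ} (ha : ‖a‖ ≤ 1) (ha' : 0 ≤ a.im) (hc : ‖c‖ ≤ 1)
    (hc' : 0 ≤ c.im) : ‖denomT a / denomT c‖ ∈ Set.Icc (1 / 10) 10 := by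
  have hs : (1.4 : ℝ) ≤ √2 := Real.le_sqrt_of_sq_le (by norm_num)
  have hal := two_mul_sqrt_two_sub_one_le_norm_denomT ha ha'
  have hcl := two_mul_sqrt_two_sub_one_le_norm_denomT hc hc'
  have hau := norm_denomT_le ha
  have hcu := norm_denomT_le hc
  rw [norm_div]
  constructor
  · rw [le_div_iff₀ (by linarith)]; linarith
  · rw [div_le_iff₀ (by linarith)]; linarith

lemma T_sub_T {b c : ℂ} (hb : denomT b ≠ 0) (hc : denomT c ≠ 0) :
    T c - T b = 8 * I * ((c - b) * (1 - b * c)) / (denomT c * denomT b) := by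
  unfold denomT at hb hc
  unfold T denomT
  field_simp
  ring

lemma T_sub_div_T_sub {a b c : ℂ} (ha : denomT a ≠ 0) (hb : denomT b ≠ 0) (hc : denomT c ≠ 0) :
    (T c - T b) / (T a - T b)
      = (c - b) / (a - b) * ((1 - b * c) / (1 - b * a)) * (denomT a / denomT c) := by
  rw [T_sub_T hb hc, T_sub_T hb ha]
  simp only [div_eq_mul_inv, mul_inv]
  field_simp

lemma norm_one_sub_mul_le {a b c : ℂ} (hb : ‖b‖ ≤ 1) :
    ‖1 - b * c‖ ≤ ‖1 - b * a‖ + ‖a - b‖ + ‖c - b‖ := by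
  have hbx : ∀ x : ℂ, ‖b * x‖ ≤ ‖x‖ := fun x ↦ by
    rw [norm_mul]; exact mul_le_of_le_one_left (norm_nonneg x) hb
  calc ‖1 - b * c‖ = ‖(1 - b * a) + b * (a - b) - b * (c - b)‖ := by congr 1; ring
    _ ≤ ‖1 - b * a‖ + ‖b * (a - b)‖ + ‖b * (c - b)‖ := norm_sub_le_of_le (norm_add_le _ _) le_rfl
    _ ≤ ‖1 - b * a‖ + ‖a - b‖ + ‖c - b‖ := by gcongr <;> exact hbx _

lemma norm_one_sub_mul_div_mem_Icc {a b c : ℂ} (ha : ‖a‖ ≤ 1) (ha' : 0 ≤ a.im) (hb : ‖b‖ ≤ 1)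
    (hb' : 0 ≤ b.im) (hc : ‖c‖ ≤ 1) (hc' : 0 ≤ c.im) (hab : a ≠ b) :
    ‖(1 - b * c) / (1 - b * a)‖ ∈
      Set.Icc (‖(c - b) / (a - b)‖ / (2 * ‖(c - b) / (a - b)‖ + 1)) (‖(c - b) / (a - b)‖ + 2) := by
  have hpm : ‖a - b‖ ≤ ‖1 - b * a‖ :=
    norm_sub_rev a b ▸ norm_sub_le_norm_one_sub_mul hb ha (by positivity)
  have hqn : ‖c - b‖ ≤ ‖1 - b * c‖ :=
    norm_sub_rev c b ▸ norm_sub_le_norm_one_sub_mul hb hc (by positivity)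
  have hnm : ‖1 - b * c‖ ≤ ‖1 - b * a‖ + ‖a - b‖ + ‖c - b‖ := norm_one_sub_mul_le hb
  have hmn : ‖1 - b * a‖ ≤ ‖1 - b * c‖ + ‖c - b‖ + ‖a - b‖ := norm_one_sub_mul_le hb
  rw [norm_div, norm_div]
  set p := ‖a - b‖
  set q := ‖c - b‖
  set m := ‖1 - b * a‖
  set n := ‖1 - b * c‖
  have hp : 0 < p := norm_pos_iff.2 (sub_ne_zero.2 hab)
  have hm : 0 < m := hp.trans_le hpm
  have hq : 0 ≤ q := norm_nonneg _
  constructor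
  · rw [div_le_div_iff₀ (by positivity) hm, div_mul_eq_mul_div, div_le_iff₀ hp]
    field_simp
    nlinarith [mul_le_mul_of_nonneg_left hqn hp.le, mul_le_mul_of_nonneg_left hqn hq]
  · rw [div_le_iff₀ hm]
    have : q ≤ q / p * m := by rw [div_mul_eq_mul_div, le_div_iff₀ hp]; nlinarith
    nlinarith

lemma sq_div_le_mul_mul_and_mul_mul_le {k ρ σ : ℝ} (hk : 0 ≤ k)
    (hρ : ρ ∈ Set.Icc (k / (2 * k + 1)) (k + 2)) (hσ : σ ∈ Set.Icc (1 / 10) 10) :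
    k ^ 2 / (100 * (k + 1)) ≤ k * ρ * σ ∧ k * ρ * σ ≤ 100 * k * (1 + k) := by
  obtain ⟨hρl, hρu⟩ := hρ
  obtain ⟨hσl, hσu⟩ := hσ
  have hρ0 : 0 ≤ ρ := (div_nonneg hk (by positivity)).trans hρl
  constructor
  · calc k ^ 2 / (100 * (k + 1)) ≤ k * (k / (2 * k + 1)) * (1 / 10) := by
          rw [div_le_iff₀ (by positivity)]
          field_simp
          nlinarith [sq_nonneg k, mul_nonneg hk (sq_nonneg k)]
      _ ≤ k * ρ * σ := by gcongr
  · calc k * ρ * σ ≤ k * (k + 2) * 10 := by gcongr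
      _ ≤ 100 * k * (1 + k) := by nlinarith

theorem stmt_7_general (a b c : ℂ)
    (ha : ‖a‖ ≤ 1) (ha' : 0 ≤ a.im)
    (hb : ‖b‖ ≤ 1) (hb' : 0 ≤ b.im)
    (hc : ‖c‖ ≤ 1) (hc' : 0 ≤ c.im)
    (hab : a ≠ b) :
    ‖(c - b) / (a - b)‖ ^ 2
        / (100 * (‖(c - b) / (a - b)‖ + 1))
      ≤ ‖(T c - T b) / (T a - T b)‖ ∧
    ‖(T c - T b) / (T a - T b)‖
      ≤ 100 * ‖(c - b) / (a - b)‖ * (1 + ‖(c - b) / (a - b)‖) := by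
  have hD : ∀ {z : ℂ}, ‖z‖ ≤ 1 → 0 ≤ z.im → denomT z ≠ 0 := fun hz hz' h ↦ by
    have := two_mul_sqrt_two_sub_one_le_norm_denomT hz hz'
    rw [h, norm_zero] at this
    linarith [Real.one_lt_sqrt_two]
  rw [T_sub_div_T_sub (hD ha ha') (hD hb hb') (hD hc hc'), norm_mul, norm_mul]
  exact sq_div_le_mul_mul_and_mul_mul_le (norm_nonneg _)
    (norm_one_sub_mul_div_mem_Icc ha ha' hb hb' hc hc' hab) (norm_denomT_div_mem_Icc ha ha' hc hc')

theorem stmt_7 (a b c : ℂ)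
    (ha : ‖a‖ ≤ 1) (ha' : 0 ≤ a.im)
    (hb : ‖b‖ ≤ 1) (hb' : 0 ≤ b.im)
    (hc : ‖c‖ ≤ 1) (hc' : 0 ≤ c.im)
    (hab : a ≠ b) (hbc : b ≠ c) (hac : a ≠ c)
    (hT : T a ≠ T b) :
    ‖(c - b) / (a - b)‖ ^ 2
        / (100 * (‖(c - b) / (a - b)‖ + 1))
      ≤ ‖(T c - T b) / (T a - T b)‖ ∧
    ‖(T c - T b) / (T a - T b)‖
      ≤ 100 * ‖(c - b) / (a - b)‖ * (1 + ‖(c - b) / (a - b)‖) :=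
  stmt_7_general a b c ha ha' hb hb' hc hc' hab
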